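/- Let E be an elliptic curve with split multiplicative reduction over a local field K_v, with Tate parameter q ∈ K_v^×, and let L_w/K_v be a cyclic extension of degree p (p odd). Then E(K_v)/N_{L_w/K_v}E(L_w) has order p if q is a norm from L_w^×, and is trivial otherwise. -/

import Mathlib

/-!
STATEMENT 11: Let `E` be an elliptic curve with split multiplicative reduction over a
local field `K_v`, with Tate parameter `q ∈ K_v^×`, and let `L_w/K_v` be a cyclic
extension of degree `p` (`p` odd).  Then `E(K_v)/N_{L_w/K_v} E(L_w)` has order `p` if
`q` is a norm from `L_w^×`, and is trivial otherwise.

Formalization: by Tate's theory `E(L̄) ≅ L̄^×/q^ℤ` compatibly with the Galois action,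
so we work with the abstract `G`-module `M = L_w^×` (written additively), with generator
`σ` of `G = Gal(L_w/K_v)`; then `K_v^× = M^G` (the fixed points), `E(K_v) = M^G/qℤ`,
and `N E(L_w) = (N(M) + qℤ)/qℤ`, so `E(K_v)/N E(L_w)` is the quotient of the fixed
points of `σ` by the subgroup generated by the norms `cnorm σ p z` and `q`; local class
field theory (`hCFT`) says `K_v^×/N(L_w^×) = M^G/N(M)` has order `p`.
-/


section CyclicCohomology

variable {A : Type*} [AddCommGroup A]

/-- The norm (trace) map of the cyclic group generated by `σ` (of order `p`):
`a ↦ ∑_{i<p} σ^i a`. -/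
def cnorm (σ : A ≃+ A) (p : ℕ) (a : A) : A := ∑ i ∈ Finset.range p, (i • σ : AddAut A) a

/-- 1-cocycles of the cyclic group `⟨σ⟩` (of order `p`) with values in the
`σ`-stable subgroup `B`: elements of `B` killed by the norm. -/
abbrev Z1 (σ : A ≃+ A) (p : ℕ) (B : AddSubgroup A) :=
  {a : A // a ∈ B ∧ cnorm σ p a = 0}

/-- `H¹(⟨σ⟩, B)`: 1-cocycles modulo coboundaries `σ b - b`, `b ∈ B`. -/
abbrev H1 (σ : A ≃+ A) (p : ℕ) (B : AddSubgroup A) :=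
  Quot fun x y : Z1 σ p B => ∃ b ∈ B, x.1 - y.1 = σ b - b

/-- `H²(⟨σ⟩, B)`: fixed points of `B` modulo norms of elements of `B`. -/
abbrev H2 (σ : A ≃+ A) (p : ℕ) (B : AddSubgroup A) :=
  Quot fun x y : {a : A // a ∈ B ∧ σ a = a} => ∃ b ∈ B, x.1 - y.1 = cnorm σ p b

end CyclicCohomology

/-!
With `F` the fixed points of `σ` and `N` the norms, the group in question is
`F ⧸ ((N ∩ F) + ℤq)`, while local class field theory says that `N ∩ F` has prime index `p`
in `F`. Adjoining the single element `q` to a subgroup of prime index either changes nothing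
(when `q` already lies in it, so the index stays `p`) or produces the whole group (index `1`).
-/

namespace AddSubgroup

theorem index_sup_zmultiples_of_index_prime {G : Type*} [AddGroup G] {H : AddSubgroup G}
    (hH : H.index.Prime) (q : G) [Decidable (q ∈ H)] :
    (H ⊔ zmultiples q).index = if q ∈ H then H.index else 1 := by
  split_ifs with hq
  · rw [sup_eq_left.mpr (zmultiples_le.mpr hq)]
  · have hle : H ≤ H ⊔ zmultiples q := le_sup_left
    refine (hH.eq_one_or_self_of_dvd _ (index_dvd_of_le hle)).resolve_right fun hp => hq ?_
    have hrel : H.relIndex (H ⊔ zmultiples q) = 1 := by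
      have := relIndex_mul_index hle
      rw [hp] at this
      exact (Nat.mul_eq_right hH.ne_zero).mp this
    exact relIndex_eq_one.mp hrel (mem_sup_right (mem_zmultiples q))

theorem natCard_quot_eq_index {X G : Type*} [AddCommGroup G] {r : X → X → Prop}
    (H : AddSubgroup G) (e : X ≃ G) (hr : ∀ x y, r x y ↔ e x - e y ∈ H) :
    Nat.card (Quot r) = H.index :=
  Nat.card_congr <| Quot.congr e fun x y => by
    rw [hr, QuotientAddGroup.leftRel_apply, neg_add_eq_sub, sub_mem_comm_iff]

end AddSubgroup

section CyclicNorm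

variable {M : Type*} [AddCommGroup M] (σ : M ≃+ M) (p : ℕ)

def fixedPoints : AddSubgroup M := σ.toAddMonoidHom.eqLocus (AddMonoidHom.id M)

def cnormHom : M →+ M :=
  AddMonoidHom.mk' (cnorm σ p) fun a b => by simp [cnorm, Finset.sum_add_distrib]

def normsInFixedPoints : AddSubgroup (fixedPoints σ) :=
  (cnormHom σ p).range.addSubgroupOf (fixedPoints σ)

theorem mem_normsInFixedPoints {a : fixedPoints σ} :
    a ∈ normsInFixedPoints σ p ↔ ∃ z, cnorm σ p z = a :=
  AddSubgroup.mem_addSubgroupOf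

theorem card_H2_top_eq_index :
    Nat.card (H2 σ p (⊤ : AddSubgroup M)) = (normsInFixedPoints σ p).index :=
  AddSubgroup.natCard_quot_eq_index _ (Equiv.subtypeEquivRight fun _ => and_iff_right trivial)
    fun x y => by
      rw [mem_normsInFixedPoints]
      exact ⟨fun ⟨b, _, hb⟩ => ⟨b, hb.symm⟩, fun ⟨b, hb⟩ => ⟨b, trivial, hb.symm⟩⟩

theorem card_quot_norms_sup_zmultiples_eq_index (q : M) (hq : σ q = q) :
    Nat.card (Quot fun x y : {a : M // σ a = a} =>
        ∃ (z : M) (k : ℤ), x.1 - y.1 = cnorm σ p z + k • q) =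
      (normsInFixedPoints σ p ⊔ AddSubgroup.zmultiples (⟨q, hq⟩ : fixedPoints σ)).index := by
  refine AddSubgroup.natCard_quot_eq_index _ (Equiv.refl _) fun x y => ?_
  simp only [AddSubgroup.mem_sup, AddSubgroup.mem_zmultiples_iff, mem_normsInFixedPoints]
  constructor
  · rintro ⟨z, k, hxy⟩
    have hz : σ (cnorm σ p z) = cnorm σ p z := by
      rw [← sub_eq_of_eq_add hxy, map_sub, map_sub, map_zsmul, x.2, y.2, hq]
    exact ⟨⟨_, hz⟩, ⟨z, rfl⟩, _, ⟨k, rfl⟩, Subtype.ext hxy.symm⟩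
  · rintro ⟨n, ⟨z, hz⟩, _, ⟨k, rfl⟩, hxy⟩
    exact ⟨z, k, by rw [hz]; exact congrArg Subtype.val hxy.symm⟩

end CyclicNorm

open Classical in
theorem selmer_stmt_11_general {p : ℕ} (hp : p.Prime) {M : Type*} [AddCommGroup M]
    (σ : M ≃+ M)
    (hCFT : Nat.card (H2 σ p (⊤ : AddSubgroup M)) = p)
    (q : M) (hq : σ q = q) :
    Nat.card (Quot fun x y : {a : M // σ a = a} =>
        ∃ (z : M) (k : ℤ), x.1 - y.1 = cnorm σ p z + k • q) =
      if ∃ z : M, cnorm σ p z = q then p else 1 := by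
  have hindex : (normsInFixedPoints σ p).index = p := by rw [← card_H2_top_eq_index, hCFT]
  rw [card_quot_norms_sup_zmultiples_eq_index σ p q hq,
    AddSubgroup.index_sup_zmultiples_of_index_prime (hindex.symm ▸ hp), hindex]
  exact if_congr (mem_normsInFixedPoints σ p) rfl rfl

open Classical in
theorem selmer_stmt_11 {p : ℕ} (hp : p.Prime) (hodd : Odd p) {M : Type*} [AddCommGroup M]
    (σ : M ≃+ M) (hσ : (p • σ : AddAut M) = 0)
    (hCFT : Nat.card (H2 σ p (⊤ : AddSubgroup M)) = p)
    (q : M) (hq : σ q = q) :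
    Nat.card (Quot fun x y : {a : M // σ a = a} =>
        ∃ (z : M) (k : ℤ), x.1 - y.1 = cnorm σ p z + k • q) =
      if ∃ z : M, cnorm σ p z = q then p else 1 :=
  selmer_stmt_11_general hp σ hCFT q hq
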